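/- Let p, q ∈ ℝⁿ with p + q ≠ 0 and let ω ∈ S^{n−1}. For the boost matrix Λ_b, the spatial parts of the center-of-momentum post-collisional variables are given explicitly by p′ = (p+q)/2 + (ϱ/2)(ω + (ρ−1)(p+q)((p+q)·ω)/|p+q|²) and q′ = (p+q)/2 − (ϱ/2)(ω + (ρ−1)(p+q)((p+q)·ω)/|p+q|²), where ρ = (p⁰+q⁰)/√s. -/

import Mathlib

noncomputable section

open MeasureTheory Metric Matrix

namespace RelBoltz

/-- The energy `p⁰ = √(c² + |p|²)` of a relativistic particle with momentum `p ∈ ℝⁿ`. -/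
def energy (n : ℕ) (c : ℝ) (p : EuclideanSpace ℝ (Fin n)) : ℝ :=
  Real.sqrt (c ^ 2 + ‖p‖ ^ 2)

/-- The Euclidean dot product on `ℝⁿ`. -/
def dot (n : ℕ) (p q : EuclideanSpace ℝ (Fin n)) : ℝ := ∑ i, p i * q i

/-- The relative momentum `ϱ(p,q) = √(2(p⁰q⁰ − p·q − c²))`. -/
def relMom (n : ℕ) (c : ℝ) (p q : EuclideanSpace ℝ (Fin n)) : ℝ :=
  Real.sqrt (2 * (energy n c p * energy n c q - dot n p q - c ^ 2))

/-- The quantity `s(p,q) = 2(p⁰q⁰ − p·q + c²)`. -/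
def sQ (n : ℕ) (c : ℝ) (p q : EuclideanSpace ℝ (Fin n)) : ℝ :=
  2 * (energy n c p * energy n c q - dot n p q + c ^ 2)

/-- The Minkowski metric `g = diag(−1, 1, …, 1)` as a `(1+n)×(1+n)` matrix. -/
def eta (n : ℕ) : Matrix (Fin (n + 1)) (Fin (n + 1)) ℝ :=
  Matrix.diagonal fun μ => if μ = 0 then -1 else 1

/-- A proper Lorentz transformation: `det Λ = 1` and `Λᵀ g Λ = g`. -/
def IsLorentz (n : ℕ) (Λ : Matrix (Fin (n + 1)) (Fin (n + 1)) ℝ) : Prop :=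
  Λ.det = 1 ∧ Λᵀ * eta n * Λ = eta n

/-- The four-vector `p^μ = (p⁰, p) ∈ ℝ^{1+n}`. -/
def fourVec (n : ℕ) (c : ℝ) (p : EuclideanSpace ℝ (Fin n)) : Fin (n + 1) → ℝ :=
  Fin.cons (energy n c p) fun i => p i

/-- Condition (CM): `Λ^μ_ν (p^ν + q^ν) = (√s, 0, …, 0)`. -/
def CM (n : ℕ) (c : ℝ) (Λ : Matrix (Fin (n + 1)) (Fin (n + 1)) ℝ)
    (p q : EuclideanSpace ℝ (Fin n)) : Prop :=
  Λ.mulVec (fourVec n c p + fourVec n c q) = Fin.cons (Real.sqrt (sQ n c p q)) (fun _ => (0 : ℝ))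

/-- The candidate inverse `g Λᵀ g` of a Lorentz transformation. -/
def Linv (n : ℕ) (Λ : Matrix (Fin (n + 1)) (Fin (n + 1)) ℝ) :
    Matrix (Fin (n + 1)) (Fin (n + 1)) ℝ :=
  eta n * Λᵀ * eta n

/-- The quantity `ρ = (p⁰+q⁰)/√s` appearing in the boost matrix. -/
def rhoB (n : ℕ) (c : ℝ) (p q : EuclideanSpace ℝ (Fin n)) : ℝ :=
  (energy n c p + energy n c q) / Real.sqrt (sQ n c p q)

/-- The boost matrix `Λ_b = [[ρ, −ρ vᵀ], [−ρ v, Iₙ + (ρ−1) v vᵀ/|v|²]]`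
with `v = (p+q)/(p⁰+q⁰)`. -/
def boost (n : ℕ) (c : ℝ) (p q : EuclideanSpace ℝ (Fin n)) :
    Matrix (Fin (n + 1)) (Fin (n + 1)) ℝ :=
  Matrix.of fun μ ν =>
    Fin.cases
      (Fin.cases (rhoB n c p q)
        (fun j => -rhoB n c p q * ((p j + q j) / (energy n c p + energy n c q))) ν)
      (fun i =>
        Fin.cases (-rhoB n c p q * ((p i + q i) / (energy n c p + energy n c q)))
          (fun j =>
            (if i = j then (1 : ℝ) else 0) +
              (rhoB n c p q - 1) *
                ((p i + q i) / (energy n c p + energy n c q)) *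
                ((p j + q j) / (energy n c p + energy n c q)) /
                (∑ k, ((p k + q k) / (energy n c p + energy n c q)) ^ 2)) ν) μ

/-- The vector `k ∈ ℝⁿ`, `k^i = Λ^i_μ (p^μ − q^μ)` (spatial rows of `Λ` applied
to `p^μ − q^μ`). -/
def kvec (n : ℕ) (c : ℝ) (Λ : Matrix (Fin (n + 1)) (Fin (n + 1)) ℝ)
    (p q : EuclideanSpace ℝ (Fin n)) : EuclideanSpace ℝ (Fin n) :=
  WithLp.toLp 2 fun (i : Fin n) => Λ.mulVec (fourVec n c p - fourVec n c q) i.succ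

/-- `ω̄^μ = (√s/2, (ϱ/2)ω)`. -/
def wbar (n : ℕ) (c : ℝ) (p q ω : EuclideanSpace ℝ (Fin n)) : Fin (n + 1) → ℝ :=
  Fin.cons (Real.sqrt (sQ n c p q) / 2) fun i => (relMom n c p q / 2) * ω i

/-- `ω̃^μ = (√s/2, −(ϱ/2)ω)`. -/
def wtil (n : ℕ) (c : ℝ) (p q ω : EuclideanSpace ℝ (Fin n)) : Fin (n + 1) → ℝ :=
  Fin.cons (Real.sqrt (sQ n c p q) / 2) fun i => -(relMom n c p q / 2) * ω i

/-- The center-of-momentum post-collisional four-vector `p′^μ = (Λ⁻¹)^μ_ν ω̄^ν`. -/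
def postP (n : ℕ) (c : ℝ) (Λ : Matrix (Fin (n + 1)) (Fin (n + 1)) ℝ)
    (p q ω : EuclideanSpace ℝ (Fin n)) : Fin (n + 1) → ℝ :=
  (Linv n Λ).mulVec (wbar n c p q ω)

/-- The center-of-momentum post-collisional four-vector `q′^μ = (Λ⁻¹)^μ_ν ω̃^ν`. -/
def postQ (n : ℕ) (c : ℝ) (Λ : Matrix (Fin (n + 1)) (Fin (n + 1)) ℝ)
    (p q ω : EuclideanSpace ℝ (Fin n)) : Fin (n + 1) → ℝ :=
  (Linv n Λ).mulVec (wtil n c p q ω)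

/-- The spatial part of a vector in `ℝ^{1+n}`. -/
def spat (n : ℕ) (u : Fin (n + 1) → ℝ) : EuclideanSpace ℝ (Fin n) :=
  WithLp.toLp 2 fun (i : Fin n) => u i.succ

/-- `D₁ = (p⁰+q⁰)² − (ω·(p+q))²`. -/
def D1 (n : ℕ) (c : ℝ) (p q ω : EuclideanSpace ℝ (Fin n)) : ℝ :=
  (energy n c p + energy n c q) ^ 2 - dot n ω (p + q) ^ 2

/-- `D₂ = (p⁰+q⁰){ω·(p⁰q − q⁰p)}`. -/
def D2 (n : ℕ) (c : ℝ) (p q ω : EuclideanSpace ℝ (Fin n)) : ℝ :=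
  (energy n c p + energy n c q) * dot n ω (energy n c p • q - energy n c q • p)

/-- `a(p,q,ω) = 2(p⁰+q⁰){ω·(p⁰q − q⁰p)}/D₁`. -/
def aGS (n : ℕ) (c : ℝ) (p q ω : EuclideanSpace ℝ (Fin n)) : ℝ :=
  2 * (energy n c p + energy n c q) * dot n ω (energy n c p • q - energy n c q • p) /
    D1 n c p q ω

/-- `N⁰(p,q,ω) = 2{ω·(p+q)}{ω·(p⁰q − q⁰p)}/D₁`. -/
def N0 (n : ℕ) (c : ℝ) (p q ω : EuclideanSpace ℝ (Fin n)) : ℝ :=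
  2 * dot n ω (p + q) * dot n ω (energy n c p • q - energy n c q • p) / D1 n c p q ω

/-- The Glassey–Strauss post-collisional momentum `p′ = p + a(p,q,ω)ω`. -/
def gsP (n : ℕ) (c : ℝ) (p q ω : EuclideanSpace ℝ (Fin n)) : EuclideanSpace ℝ (Fin n) :=
  p + aGS n c p q ω • ω

/-- The Glassey–Strauss post-collisional momentum `q′ = q − a(p,q,ω)ω`. -/
def gsQ (n : ℕ) (c : ℝ) (p q ω : EuclideanSpace ℝ (Fin n)) : EuclideanSpace ℝ (Fin n) :=
  q - aGS n c p q ω • ω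

/-- The Glassey–Strauss kernel `B(p,q,ω)`. -/
def BGS (n : ℕ) (c : ℝ) (p q ω : EuclideanSpace ℝ (Fin n)) : ℝ :=
  c * (energy n c p + energy n c q) ^ 2 * energy n c p * energy n c q *
    |dot n ω ((energy n c p)⁻¹ • p - (energy n c q)⁻¹ • q)| / D1 n c p q ω ^ 2

/-- The dimensional factor `A(p,q,ω)`. -/
def AGS (n : ℕ) (c : ℝ) (p q ω : EuclideanSpace ℝ (Fin n)) : ℝ :=
  (4 / relMom n c p q) * (energy n c p + energy n c q) * energy n c p * energy n c q *
    |dot n ω ((energy n c p)⁻¹ • p - (energy n c q)⁻¹ • q)| / D1 n c p q ω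

/-- The dimensional Glassey–Strauss kernel `B_n(p,q,ω) = B(p,q,ω)·(A(p,q,ω))^{n−3}`. -/
def Bn (n : ℕ) (c : ℝ) (p q ω : EuclideanSpace ℝ (Fin n)) : ℝ :=
  BGS n c p q ω * AGS n c p q ω ^ ((n : ℤ) - 3)

/-- The Møller velocity `v_ø(p,q) = (c/4) ϱ √s / (p⁰q⁰)`. -/
def moller (n : ℕ) (c : ℝ) (p q : EuclideanSpace ℝ (Fin n)) : ℝ :=
  (c / 4) * relMom n c p q * Real.sqrt (sQ n c p q) / (energy n c p * energy n c q)

/-- The explicit boost form of the combination appearing in the center-of-momentum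
post-collisional momenta. -/
def cmDir (n : ℕ) (c : ℝ) (p q ω : EuclideanSpace ℝ (Fin n)) : EuclideanSpace ℝ (Fin n) :=
  ω + ((rhoB n c p q - 1) * dot n (p + q) ω / ‖p + q‖ ^ 2) • (p + q)

/-- The explicit boost form of the center-of-momentum post-collisional momentum `p′`. -/
def cmP (n : ℕ) (c : ℝ) (p q ω : EuclideanSpace ℝ (Fin n)) : EuclideanSpace ℝ (Fin n) :=
  (1 / 2 : ℝ) • (p + q) + (relMom n c p q / 2) • cmDir n c p q ω

/-- The explicit boost form of the center-of-momentum post-collisional momentum `q′`. -/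
def cmQ (n : ℕ) (c : ℝ) (p q ω : EuclideanSpace ℝ (Fin n)) : EuclideanSpace ℝ (Fin n) :=
  (1 / 2 : ℝ) • (p + q) - (relMom n c p q / 2) • cmDir n c p q ω

/-- The explicit boost form of the vector `k`. -/
def kB (n : ℕ) (c : ℝ) (p q : EuclideanSpace ℝ (Fin n)) : EuclideanSpace ℝ (Fin n) :=
  (-(energy n c p - energy n c q) / Real.sqrt (sQ n c p q)) • (p + q) + (p - q) +
    ((rhoB n c p q - 1) * dot n (p + q) (p - q) / ‖p + q‖ ^ 2) • (p + q)

/-- The center-of-momentum scattering angle `cos θ_cm = (k/|k|)·ω`. -/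
def cosCM (n : ℕ) (c : ℝ) (p q ω : EuclideanSpace ℝ (Fin n)) : ℝ :=
  dot n (kB n c p q) ω / ‖kB n c p q‖

/-- The Glassey–Strauss scattering angle
`cos θ_gs = 1 − 8{ω·(p⁰q − q⁰p)}²/(D₁ϱ²)`. -/
def cosGS (n : ℕ) (c : ℝ) (p q ω : EuclideanSpace ℝ (Fin n)) : ℝ :=
  1 - 8 * dot n ω (energy n c p • q - energy n c q • p) ^ 2 /
    (D1 n c p q ω * relMom n c p q ^ 2)

/-- The surface measure on the unit sphere `S^{n−1} ⊂ ℝⁿ`. -/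
def sphMeasure (n : ℕ) : Measure (sphere (0 : EuclideanSpace ℝ (Fin n)) 1) :=
  (volume : Measure (EuclideanSpace ℝ (Fin n))).toSphere

/-!
The matrix `g Λᵀ g` built from `Λ = boostMatrix ρ v` has first column `(ρ, ρ v)` and the
symmetric spatial block `Iₙ + (ρ−1) v vᵀ/|v|²`, so it sends `(a, w)` to a vector with spatial
part `ρ a v + w + (ρ−1) (v·w) v/|v|²`. For `v = (p+q)/(p⁰+q⁰)`, `a = √s/2` and
`ρ = (p⁰+q⁰)/√s` the first term is `(p+q)/2`, and the last one does not change when `v` is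
rescaled to `p+q`.
-/

section Boost

variable {n : ℕ}

def boostMatrix (ρ : ℝ) (v : Fin n → ℝ) : Matrix (Fin (n + 1)) (Fin (n + 1)) ℝ :=
  Matrix.of fun μ ν =>
    Fin.cases (Fin.cases ρ (fun j => -ρ * v j) ν)
      (fun i => Fin.cases (-ρ * v i)
        (fun j => (if i = j then (1 : ℝ) else 0) + (ρ - 1) * v i * v j / (∑ k, v k ^ 2)) ν) μ

lemma boost_eq_boostMatrix (c : ℝ) (p q : EuclideanSpace ℝ (Fin n)) :
    boost n c p q =
      boostMatrix (rhoB n c p q) fun i => (p i + q i) / (energy n c p + energy n c q) :=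
  rfl

lemma Linv_apply (Λ : Matrix (Fin (n + 1)) (Fin (n + 1)) ℝ) (μ ν : Fin (n + 1)) :
    Linv n Λ μ ν = (if μ = 0 then -1 else 1) * Λ ν μ * (if ν = 0 then -1 else 1) := by
  simp [Linv, eta, Matrix.diagonal_mul, Matrix.mul_diagonal]

lemma Linv_boostMatrix_mulVec_succ (ρ a : ℝ) (v w : Fin n → ℝ) (i : Fin n) :
    (Linv n (boostMatrix ρ v) *ᵥ Fin.cons a w) i.succ =
      ρ * a * v i + w i + (ρ - 1) * (v ⬝ᵥ w) / (v ⬝ᵥ v) * v i := by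
  have hsum : ∑ j, (if j = i then (1 : ℝ) else 0) * w j = w i := by simp
  have hrank : ∑ j, (ρ - 1) * v j * v i / (∑ k, v k ^ 2) * w j =
      (ρ - 1) * (v ⬝ᵥ w) / (v ⬝ᵥ v) * v i := by
    simp only [dotProduct, ← sq, Finset.mul_sum, Finset.sum_div, Finset.sum_mul]
    exact Finset.sum_congr rfl fun j _ => by ring
  rw [mulVec, dotProduct, Fin.sum_univ_succ]
  simp only [Fin.cons_zero, Fin.cons_succ, Linv_apply, boostMatrix, of_apply, Fin.cases_zero,
    Fin.cases_succ, Fin.succ_ne_zero, if_true, if_false, one_mul, mul_one, add_mul,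
    Finset.sum_add_distrib, hsum, hrank]
  ring

end Boost

section Kinematics

variable {n : ℕ} {c : ℝ}

lemma dot_eq_inner (p q : EuclideanSpace ℝ (Fin n)) : dot n p q = inner ℝ p q := by
  simp [dot, EuclideanSpace.inner_eq_star_dotProduct, dotProduct, mul_comm]

lemma norm_le_energy (p : EuclideanSpace ℝ (Fin n)) : ‖p‖ ≤ energy n c p :=
  Real.le_sqrt_of_sq_le (by nlinarith [sq_nonneg c])

lemma energy_pos (hc : 0 < c) (p : EuclideanSpace ℝ (Fin n)) : 0 < energy n c p :=
  Real.sqrt_pos.2 (by positivity)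

lemma sQ_pos (hc : 0 < c) (p q : EuclideanSpace ℝ (Fin n)) : 0 < sQ n c p q := by
  have hdot : dot n p q ≤ energy n c p * energy n c q := calc
    dot n p q ≤ ‖p‖ * ‖q‖ := dot_eq_inner p q ▸ real_inner_le_norm p q
    _ ≤ energy n c p * energy n c q :=
      mul_le_mul (norm_le_energy p) (norm_le_energy q) (norm_nonneg q)
        (energy_pos hc p).le
  rw [sQ]
  nlinarith

lemma rhoB_mul_sqrt_sQ (hc : 0 < c) (p q : EuclideanSpace ℝ (Fin n)) :
    rhoB n c p q * √(sQ n c p q) = energy n c p + energy n c q :=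
  div_mul_cancel₀ _ (Real.sqrt_pos.2 (sQ_pos hc p q)).ne'

lemma spat_Linv_boost_mulVec (hc : 0 < c) (p q ω : EuclideanSpace ℝ (Fin n)) (r : ℝ) :
    spat n (Linv n (boost n c p q) *ᵥ Fin.cons (√(sQ n c p q) / 2) fun i => r * ω i) =
      (1 / 2 : ℝ) • (p + q) +
        r • (ω + ((rhoB n c p q - 1) * dot n (p + q) ω / ‖p + q‖ ^ 2) • (p + q)) := by
  have hρ := rhoB_mul_sqrt_sQ hc p q
  set E := energy n c p + energy n c q
  have hE : E ≠ 0 := (add_pos (energy_pos hc p) (energy_pos hc q)).ne'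
  have hv : (fun i => (p i + q i) / E) = E⁻¹ • WithLp.ofLp (p + q) := by
    ext i; simp [div_eq_inv_mul]
  have hw : (fun i => r * ω i) = r • WithLp.ofLp ω := rfl
  have hnorm : WithLp.ofLp (p + q) ⬝ᵥ WithLp.ofLp (p + q) = ‖p + q‖ ^ 2 := by
    rw [EuclideanSpace.real_norm_sq_eq, dotProduct]
    simp only [sq]
  have hdot : WithLp.ofLp (p + q) ⬝ᵥ WithLp.ofLp ω = dot n (p + q) ω := rfl
  ext i
  rw [spat, boost_eq_boostMatrix, hv, hw, PiLp.toLp_apply, Linv_boostMatrix_mulVec_succ]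
  simp only [smul_dotProduct, dotProduct_smul, hnorm, hdot, Pi.smul_apply, smul_eq_mul,
    PiLp.add_apply, PiLp.smul_apply]
  rw [← mul_div_assoc, hρ]
  field_simp
  ring

end Kinematics

theorem statement7_general (n : ℕ) (c : ℝ) (hc : 0 < c)
    (p q : EuclideanSpace ℝ (Fin n))
    (ω : EuclideanSpace ℝ (Fin n)) :
    spat n (postP n c (boost n c p q) p q ω) =
      (1 / 2 : ℝ) • (p + q) + (relMom n c p q / 2) •
        (ω + ((rhoB n c p q - 1) * dot n (p + q) ω / ‖p + q‖ ^ 2) • (p + q)) ∧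
    spat n (postQ n c (boost n c p q) p q ω) =
      (1 / 2 : ℝ) • (p + q) - (relMom n c p q / 2) •
        (ω + ((rhoB n c p q - 1) * dot n (p + q) ω / ‖p + q‖ ^ 2) • (p + q)) := by
  refine ⟨spat_Linv_boost_mulVec hc p q ω _, ?_⟩
  rw [sub_eq_add_neg, ← neg_smul]
  exact spat_Linv_boost_mulVec hc p q ω _

/-- For the boost matrix, the spatial parts of the center-of-momentum
post-collisional variables are given by the explicit formulas
`p′ = (p+q)/2 + (ϱ/2)(ω + (ρ−1)(p+q)((p+q)·ω)/|p+q|²)` and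
`q′ = (p+q)/2 − (ϱ/2)(ω + (ρ−1)(p+q)((p+q)·ω)/|p+q|²)`. -/
theorem statement7 (n : ℕ) (hn : 2 ≤ n) (c : ℝ) (hc : 0 < c)
    (p q : EuclideanSpace ℝ (Fin n)) (hpq : p + q ≠ 0)
    (ω : EuclideanSpace ℝ (Fin n)) (hω : ‖ω‖ = 1) :
    spat n (postP n c (boost n c p q) p q ω) =
      (1 / 2 : ℝ) • (p + q) + (relMom n c p q / 2) •
        (ω + ((rhoB n c p q - 1) * dot n (p + q) ω / ‖p + q‖ ^ 2) • (p + q)) ∧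
    spat n (postQ n c (boost n c p q) p q ω) =
      (1 / 2 : ℝ) • (p + q) - (relMom n c p q / 2) •
        (ω + ((rhoB n c p q - 1) * dot n (p + q) ω / ‖p + q‖ ^ 2) • (p + q)) :=
  statement7_general n c hc p q ω

end RelBoltz
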